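/- arXiv:1010.0846 — 4 statements merged into one kernel-verified Lean document; each statement's English description precedes it below -/
import Mathlib

section
/- For any finite sets 𝒳, 𝒴, any distribution μ on 𝒳×𝒴 and any distribution λ on 𝒳×𝒴 with supp(λ) ⊆ supp(μ), one has crent^μ_𝒳(λ) + crent^μ_𝒴(λ) ≤ 2·S∞(λ||μ). -/
open scoped BigOperators ENNReal
open Classical

noncomputable section

/-- `p` is a probability distribution on the finite type `α`. -/
def IsDist {α : Type*} [Fintype α] (p : α → ℝ) : Prop :=
  (∀ a, 0 ≤ p a) ∧ ∑ a, p a = 1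

/-- Relative entropy (base 2) `S(p‖q)`. -/
def relEnt {α : Type*} [Fintype α] (p q : α → ℝ) : ℝ :=
  ∑ a, if 0 < p a then p a * Real.logb 2 (p a / q a) else 0

/-- Relative min-entropy `S∞(p‖q) = max_{a : p a > 0} log (p a / q a)`. -/
def relMinEnt {α : Type*} [Fintype α] (p q : α → ℝ) : ℝ :=
  sSup {r | ∃ a, 0 < p a ∧ r = Real.logb 2 (p a / q a)}

/-- Marginal on the first component. -/
def margX {α β : Type*} [Fintype α] [Fintype β] (p : α × β → ℝ) : α → ℝ :=
  fun x => ∑ y, p (x, y)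

/-- Marginal on the second component. -/
def margY {α β : Type*} [Fintype α] [Fintype β] (p : α × β → ℝ) : β → ℝ :=
  fun y => ∑ x, p (x, y)

/-- Conditional distribution of the second component given the first equals `x`. -/
def condY {α β : Type*} [Fintype α] [Fintype β] (p : α × β → ℝ) (x : α) : β → ℝ :=
  fun y => p (x, y) / margX p x

/-- Conditional distribution of the first component given the second equals `y`. -/
def condX {α β : Type*} [Fintype α] [Fintype β] (p : α × β → ℝ) (y : β) : α → ℝ :=
  fun x => p (x, y) / margY p y

/-- `crent^μ_𝒳(λ) = E_{x←X₁} S((Y₁)_x ‖ Y_x)`. -/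
def crentX {α β : Type*} [Fintype α] [Fintype β] (lam mu : α × β → ℝ) : ℝ :=
  ∑ x, margX lam x * relEnt (condY lam x) (condY mu x)

/-- `crent^μ_𝒴(λ) = E_{y←Y₁} S((X₁)_y ‖ X_y)`. -/
def crentY {α β : Type*} [Fintype α] [Fintype β] (lam mu : α × β → ℝ) : ℝ :=
  ∑ y, margY lam y * relEnt (condX lam y) (condX mu y)

/-- `λ` is one-way for `μ` with respect to `𝒳`: `λ(y|x) = μ(y|x)` on the support of `λ`. -/
def OneWayX {α β : Type*} [Fintype α] [Fintype β] (lam mu : α × β → ℝ) : Prop :=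
  ∀ x y, 0 < lam (x, y) → condY lam x y = condY mu x y

/-- `λ` is one-way for `μ` with respect to `𝒴`: `λ(x|y) = μ(x|y)` on the support of `λ`. -/
def OneWayY {α β : Type*} [Fintype α] [Fintype β] (lam mu : α × β → ℝ) : Prop :=
  ∀ x y, 0 < lam (x, y) → condX lam y x = condX mu y x

/-- `λ` is SM-like for `μ`. -/
def SMLike {α β : Type*} [Fintype α] [Fintype β] (lam mu : α × β → ℝ) : Prop :=
  ∃ θ : α × β → ℝ, IsDist θ ∧ OneWayX θ mu ∧ OneWayY lam θ

/-- `err_{f,S}(λ) = min_{z ∈ S} Pr_{(x,y)←λ}[(x,y,z) ∉ f]`. -/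
def errRel {α β γ : Type*} [Fintype α] [Fintype β] (f : Set (α × β × γ)) (S : Set γ)
    (lam : α × β → ℝ) : ℝ :=
  sInf {e | ∃ z ∈ S, e = ∑ p : α × β, if (p.1, p.2, z) ∉ f then lam p else 0}

/-- `ess^μ(f,S) = 1 − Pr_{(x,y)←μ}[∃ z ∉ S, (x,y,z) ∈ f]`. -/
def ess {α β γ : Type*} [Fintype α] [Fintype β] (f : Set (α × β × γ)) (S : Set γ)
    (mu : α × β → ℝ) : ℝ :=
  1 - ∑ p : α × β, if ∃ z ∉ S, (p.1, p.2, z) ∈ f then mu p else 0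

/-- The two-way `ε`-error conditional relative entropy bound `crent^{2,μ}_ε(f,S)`
(`+∞` if no feasible `λ` exists). -/
def crent2 {α β γ : Type*} [Fintype α] [Fintype β] (f : Set (α × β × γ)) (S : Set γ)
    (mu : α × β → ℝ) (ε : ℝ) : ℝ≥0∞ :=
  sInf {c | ∃ lam : α × β → ℝ, IsDist lam ∧ SMLike lam mu ∧ errRel f S lam ≤ ε ∧
    c = ENNReal.ofReal (crentX lam mu + crentY lam mu)}

/-- The two-way `ε`-error relative min-entropy bound `ment^{2,μ}_ε(f,S)`
(`+∞` if no feasible `λ` exists). -/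
def ment2 {α β γ : Type*} [Fintype α] [Fintype β] (f : Set (α × β × γ)) (S : Set γ)
    (mu : α × β → ℝ) (ε : ℝ) : ℝ≥0∞ :=
  sInf {c | ∃ lam : α × β → ℝ, IsDist lam ∧ SMLike lam mu ∧ errRel f S lam ≤ ε ∧
    c = ENNReal.ofReal (relMinEnt lam mu)}

/-- The `k`-fold product distribution `μ^k` on `𝒳^k × 𝒴^k`. -/
def prodDist {α β : Type*} [Fintype α] [Fintype β] (mu : α × β → ℝ) (k : ℕ) :
    (Fin k → α) × (Fin k → β) → ℝ :=
  fun p => ∏ i, mu (p.1 i, p.2 i)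

/-- The `k`-fold product relation `f^k`. -/
def relPow {α β γ : Type*} (f : Set (α × β × γ)) (k : ℕ) :
    Set ((Fin k → α) × (Fin k → β) × (Fin k → γ)) :=
  {p | ∀ i, (p.1 i, p.2.1 i, p.2.2 i) ∈ f}


/-
The chain rule for relative entropy splits `S(λ‖μ)` as `S(λ_X‖μ_X) + crent^μ_𝒳(λ)`; by Gibbs'
inequality the marginal term is nonnegative, so `crent^μ_𝒳(λ) ≤ S(λ‖μ) ≤ S∞(λ‖μ)`. Swapping the
two coordinates gives the same bound for `crent^μ_𝒴(λ)`.
-/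

open Finset

section RelEnt

variable {α : Type*} [Fintype α]

lemma relEnt_eq_sum {p : α → ℝ} (hp : ∀ a, 0 ≤ p a) (q : α → ℝ) :
    relEnt p q = ∑ a, p a * Real.logb 2 (p a / q a) := by
  refine sum_congr rfl fun a _ => ?_
  rcases (hp a).eq_or_lt with h | h
  · simp [← h]
  · exact if_pos h

lemma IsDist.comp_equiv {β : Type*} [Fintype β] {p : α → ℝ} (hp : IsDist p) (e : β ≃ α) :
    IsDist (p ∘ e) :=
  ⟨fun b => hp.1 (e b), (e.sum_comp p).trans hp.2⟩

lemma relMinEnt_comp_equiv {β : Type*} [Fintype β] (p q : α → ℝ) (e : β ≃ α) :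
    relMinEnt (p ∘ e) (q ∘ e) = relMinEnt p q := by
  unfold relMinEnt
  congr 1
  ext r
  exact ⟨fun ⟨b, hb, hr⟩ => ⟨e b, hb, hr⟩,
    fun ⟨a, ha, hr⟩ => ⟨e.symm a, by simpa using ha, by simpa using hr⟩⟩

lemma logb_div_le_relMinEnt (p q : α → ℝ) {a : α} (ha : 0 < p a) :
    Real.logb 2 (p a / q a) ≤ relMinEnt p q := by
  refine le_csSup ?_ ⟨a, ha, rfl⟩
  refine (Set.finite_range fun a => Real.logb 2 (p a / q a)).bddAbove.mono ?_
  rintro _ ⟨b, -, rfl⟩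
  exact ⟨b, rfl⟩

lemma relEnt_le_relMinEnt {p : α → ℝ} (hp : IsDist p) (q : α → ℝ) :
    relEnt p q ≤ relMinEnt p q := by
  calc relEnt p q = ∑ a, p a * Real.logb 2 (p a / q a) := relEnt_eq_sum hp.1 q
    _ ≤ ∑ a, p a * relMinEnt p q := by
        refine sum_le_sum fun a _ => ?_
        rcases (hp.1 a).eq_or_lt with h | h
        · simp [← h]
        · exact mul_le_mul_of_nonneg_left (logb_div_le_relMinEnt p q h) h.le
    _ = relMinEnt p q := by rw [← sum_mul, hp.2, one_mul]

lemma relEnt_nonneg {p q : α → ℝ} (hp : IsDist p) (hq : IsDist q)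
    (hpq : ∀ a, 0 < p a → 0 < q a) : 0 ≤ relEnt p q := by
  have hterm : ∀ a, (p a - q a) / Real.log 2 ≤ p a * Real.logb 2 (p a / q a) := by
    intro a
    rcases (hp.1 a).eq_or_lt with h | h
    · rw [← h, zero_sub, zero_mul]
      exact div_nonpos_of_nonpos_of_nonneg (neg_nonpos.2 (hq.1 a)) (Real.log_nonneg one_le_two)
    · have hlog := Real.one_sub_inv_le_log_of_pos (div_pos h (hpq a h))
      rw [Real.logb, mul_div_assoc']
      refine div_le_div_of_nonneg_right ?_ (Real.log_nonneg one_le_two)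
      calc p a - q a = p a * (1 - (p a / q a)⁻¹) := by field_simp
        _ ≤ p a * Real.log (p a / q a) := mul_le_mul_of_nonneg_left hlog h.le
  calc (0 : ℝ) = (∑ a, p a - ∑ a, q a) / Real.log 2 := by rw [hp.2, hq.2, sub_self, zero_div]
    _ = ∑ a, (p a - q a) / Real.log 2 := by rw [← sum_sub_distrib, sum_div]
    _ ≤ ∑ a, p a * Real.logb 2 (p a / q a) := sum_le_sum fun a _ => hterm a
    _ = relEnt p q := (relEnt_eq_sum hp.1 q).symm

end RelEnt

section Conditional

variable {α β : Type*} [Fintype α] [Fintype β]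

lemma IsDist.margX {p : α × β → ℝ} (hp : IsDist p) : IsDist (margX p) :=
  ⟨fun _ => sum_nonneg fun _ _ => hp.1 _,
    (Fintype.sum_prod_type' fun x y => p (x, y)).symm.trans hp.2⟩

lemma le_margX {p : α × β → ℝ} (hp : ∀ a, 0 ≤ p a) (x : α) (y : β) : p (x, y) ≤ margX p x :=
  single_le_sum (f := fun y => p (x, y)) (fun _ _ => hp _) (mem_univ y)

lemma margX_pos_of_supp {lam mu : α × β → ℝ} (hmu : ∀ a, 0 ≤ mu a)
    (hsupp : ∀ p, 0 < lam p → 0 < mu p) {x : α} (hx : 0 < margX lam x) : 0 < margX mu x := by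
  obtain ⟨y, -, hy⟩ := exists_lt_of_sum_lt (by simpa [margX] using hx : ∑ _ : β, (0 : ℝ) < _)
  exact (hsupp _ hy).trans_le (le_margX hmu x y)

lemma condY_nonneg {p : α × β → ℝ} (hp : ∀ a, 0 ≤ p a) (x : α) (y : β) : 0 ≤ condY p x y :=
  div_nonneg (hp _) (sum_nonneg fun _ _ => hp _)

lemma relEnt_eq_relEnt_margX_add_crentX {lam mu : α × β → ℝ} (hlam : ∀ a, 0 ≤ lam a)
    (hmu : ∀ a, 0 ≤ mu a) (hsupp : ∀ p, 0 < lam p → 0 < mu p) :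
    relEnt lam mu = relEnt (margX lam) (margX mu) + crentX lam mu := by
  have hterm : ∀ x y, lam (x, y) * Real.logb 2 (lam (x, y) / mu (x, y)) =
      lam (x, y) * Real.logb 2 (margX lam x / margX mu x) +
        margX lam x * (condY lam x y * Real.logb 2 (condY lam x y / condY mu x y)) := by
    intro x y
    rcases (hlam (x, y)).eq_or_lt with h | h
    · simp [condY, ← h]
    have hx : 0 < margX lam x := h.trans_le (le_margX hlam x y)
    have hxy := hsupp _ h
    have hmx := margX_pos_of_supp hmu hsupp hx
    have hratio : condY lam x y / condY mu x y =
        lam (x, y) / mu (x, y) / (margX lam x / margX mu x) := by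
      unfold condY; field_simp
    have hcond : margX lam x * condY lam x y = lam (x, y) := by
      unfold condY; field_simp
    rw [hratio, Real.logb_div (x := lam (x, y) / mu (x, y)) (by positivity) (by positivity),
      ← mul_assoc, hcond]
    ring
  rw [relEnt_eq_sum hlam, relEnt_eq_sum (p := margX lam) fun x => sum_nonneg fun y _ => hlam (x, y),
    crentX, Fintype.sum_prod_type, ← sum_add_distrib]
  refine sum_congr rfl fun x _ => ?_
  rw [relEnt_eq_sum (condY_nonneg hlam x), mul_sum]
  simp only [hterm, sum_add_distrib, ← sum_mul]
  rfl

lemma crentX_le_relEnt {lam mu : α × β → ℝ} (hlam : IsDist lam) (hmu : IsDist mu)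
    (hsupp : ∀ p, 0 < lam p → 0 < mu p) : crentX lam mu ≤ relEnt lam mu := by
  rw [relEnt_eq_relEnt_margX_add_crentX hlam.1 hmu.1 hsupp]
  exact le_add_of_nonneg_left <|
    relEnt_nonneg hlam.margX hmu.margX fun _ hx => margX_pos_of_supp hmu.1 hsupp hx

lemma crentX_le_relMinEnt {lam mu : α × β → ℝ} (hlam : IsDist lam) (hmu : IsDist mu)
    (hsupp : ∀ p, 0 < lam p → 0 < mu p) : crentX lam mu ≤ relMinEnt lam mu :=
  (crentX_le_relEnt hlam hmu hsupp).trans (relEnt_le_relMinEnt hlam mu)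

lemma crentY_eq_crentX_comp_prodComm (lam mu : α × β → ℝ) :
    crentY lam mu = crentX (lam ∘ Equiv.prodComm β α) (mu ∘ Equiv.prodComm β α) :=
  rfl

lemma crentY_le_relMinEnt {lam mu : α × β → ℝ} (hlam : IsDist lam) (hmu : IsDist mu)
    (hsupp : ∀ p, 0 < lam p → 0 < mu p) : crentY lam mu ≤ relMinEnt lam mu := by
  rw [crentY_eq_crentX_comp_prodComm, ← relMinEnt_comp_equiv lam mu (Equiv.prodComm β α)]
  exact crentX_le_relMinEnt (hlam.comp_equiv _) (hmu.comp_equiv _) fun _ => hsupp _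

end Conditional

/-- For distributions `λ, μ` on `𝒳 × 𝒴` with `supp λ ⊆ supp μ`,
`crent^μ_𝒳(λ) + crent^μ_𝒴(λ) ≤ 2 · S∞(λ‖μ)`. -/
theorem crent_le_two_relMinEnt {α β : Type*} [Fintype α] [Fintype β]
    (lam mu : α × β → ℝ) (hlam : IsDist lam) (hmu : IsDist mu)
    (hsupp : ∀ p : α × β, 0 < lam p → 0 < mu p) :
    crentX lam mu + crentY lam mu ≤ 2 * relMinEnt lam mu := by
  linarith [crentX_le_relMinEnt hlam hmu hsupp, crentY_le_relMinEnt hlam hmu hsupp]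

end
end

section
/- For the Razborov distribution with n = 4l−1: (i) Pr[X ∩ Y = ∅] = 3·Pr[I ∉ X and I ∉ Y], and (ii) the conditional distribution of the pair (X,Y) given the event {X ∩ Y = ∅} is identical to the conditional distribution of (X,Y) given the event {I ∉ X and I ∉ Y} (both are the uniform distribution over pairs of disjoint size-l subsets x, y of [n]). -/
open scoped BigOperators ENNReal
open Classical

noncomputable section

/-- A valid value `t = (t₁, t₂, i)` of the random partition `T`:
`t₁, t₂` are disjoint sets of size `2l − 1` not containing `i`
(together with `{i}` they partition `[n]` when `n = 4l − 1`). -/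
def ValidT (l : ℕ) {n : ℕ} (t : Finset (Fin n) × Finset (Fin n) × Fin n) : Prop :=
  t.1.card = 2 * l - 1 ∧ t.2.1.card = 2 * l - 1 ∧ Disjoint t.1 t.2.1 ∧
    t.2.2 ∉ t.1 ∧ t.2.2 ∉ t.2.1

/-- The support of the Razborov distribution: triples `(t, x, y)` with `t` a valid
partition, `x ⊆ t₁ ∪ {i}` of size `l`, and `y ⊆ t₂ ∪ {i}` of size `l`. -/
def razSupp (l n : ℕ) :
    Finset ((Finset (Fin n) × Finset (Fin n) × Fin n) × Finset (Fin n) × Finset (Fin n)) :=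
  Finset.univ.filter (fun q =>
    ValidT l q.1 ∧ q.2.1 ⊆ insert q.1.2.2 q.1.1 ∧ q.2.1.card = l ∧
      q.2.2 ⊆ insert q.1.2.2 q.1.2.1 ∧ q.2.2.card = l)

/-- The Razborov distribution, as the joint distribution of `(T, X, Y)`:
uniform over its support (all conditional fibers have equal size). -/
def razDist (l n : ℕ) :
    (Finset (Fin n) × Finset (Fin n) × Fin n) × Finset (Fin n) × Finset (Fin n) → ℝ :=
  fun q => if q ∈ razSupp l n then 1 / ((razSupp l n).card : ℝ) else 0

/-- The marginal of the Razborov distribution on `(X, Y)`. -/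
def razXY (l n : ℕ) : Finset (Fin n) × Finset (Fin n) → ℝ :=
  fun p => ∑ t : Finset (Fin n) × Finset (Fin n) × Fin n, razDist l n (t, p.1, p.2)

/-- The set-disjointness function as a relation: `(x, y, z) ∈ disjRel` iff
`z = DISJ(x,y)`, i.e. `z = true` iff `x ∩ y = ∅`. -/
def disjRel (n : ℕ) : Set (Finset (Fin n) × Finset (Fin n) × Bool) :=
  {q | q.2.2 = decide (q.1 ∩ q.2.1 = ∅)}


/-- `Pr[X ∩ Y = ∅]` under the Razborov distribution. -/
def prDisj (l n : ℕ) : ℝ :=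
  ∑ q : (Finset (Fin n) × Finset (Fin n) × Fin n) × Finset (Fin n) × Finset (Fin n),
    if q.2.1 ∩ q.2.2 = ∅ then razDist l n q else 0

/-- `Pr[I ∉ X ∧ I ∉ Y]` under the Razborov distribution. -/
def prNoI (l n : ℕ) : ℝ :=
  ∑ q : (Finset (Fin n) × Finset (Fin n) × Fin n) × Finset (Fin n) × Finset (Fin n),
    if q.1.2.2 ∉ q.2.1 ∧ q.1.2.2 ∉ q.2.2 then razDist l n q else 0

/-- The conditional distribution of `(X,Y)` given the event `{X ∩ Y = ∅}`. -/
def condDisjXY (l n : ℕ) (p : Finset (Fin n) × Finset (Fin n)) : ℝ :=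
  (∑ t : Finset (Fin n) × Finset (Fin n) × Fin n,
      if p.1 ∩ p.2 = ∅ then razDist l n (t, p.1, p.2) else 0) / prDisj l n

/-- The conditional distribution of `(X,Y)` given the event `{I ∉ X ∧ I ∉ Y}`. -/
def condNoIXY (l n : ℕ) (p : Finset (Fin n) × Finset (Fin n)) : ℝ :=
  (∑ t : Finset (Fin n) × Finset (Fin n) × Fin n,
      if t.2.2 ∉ p.1 ∧ t.2.2 ∉ p.2 then razDist l n (t, p.1, p.2) else 0) / prNoI l n

/-- The uniform distribution over pairs of disjoint size-`l` subsets of `[n]`. -/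
def unifDisjPairs (l n : ℕ) (p : Finset (Fin n) × Finset (Fin n)) : ℝ :=
  if p.1 ∩ p.2 = ∅ ∧ p.1.card = l ∧ p.2.card = l then
    1 / ((Finset.univ.filter (fun p : Finset (Fin n) × Finset (Fin n) =>
      p.1 ∩ p.2 = ∅ ∧ p.1.card = l ∧ p.2.card = l)).card : ℝ)
  else 0

-- AUX LEMMAS (to be placed after the given defs)
lemma card_sandwich {α : Type*} [Fintype α] [DecidableEq α] (a b : Finset α) (hab : a ⊆ b)
    (k : ℕ) (hk : a.card ≤ k) :
    (Finset.univ.filter (fun s : Finset α => a ⊆ s ∧ s ⊆ b ∧ s.card = k)).card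
      = (b.card - a.card).choose (k - a.card) := by
  have : (Finset.univ.filter (fun s : Finset α => a ⊆ s ∧ s ⊆ b ∧ s.card = k)).card
      = ((b \ a).powersetCard (k - a.card)).card := by
    apply Finset.card_bij' (fun s _ => s \ a) (fun u _ => u ∪ a)
    · intro s hs
      simp only [Finset.mem_filter, Finset.mem_univ, true_and] at hs
      obtain ⟨h1, h2, h3⟩ := hs
      rw [Finset.mem_powersetCard]
      exact ⟨Finset.sdiff_subset_sdiff h2 le_rfl, by rw [Finset.card_sdiff_of_subset h1, h3]⟩
    · intro u hu
      rw [Finset.mem_powersetCard] at hu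
      obtain ⟨h1, h2⟩ := hu
      have hdisj : Disjoint u a := (Finset.sdiff_disjoint.mono_left h1)
      simp only [Finset.mem_filter, Finset.mem_univ, true_and]
      refine ⟨Finset.subset_union_right, Finset.union_subset (h1.trans (Finset.sdiff_subset)) hab, ?_⟩
      rw [Finset.card_union_of_disjoint hdisj, h2]
      omega
    · intro s hs
      simp only [Finset.mem_filter, Finset.mem_univ, true_and] at hs
      exact Finset.sdiff_union_of_subset hs.1
    · intro u hu
      rw [Finset.mem_powersetCard] at hu
      exact Finset.union_sdiff_cancel_right (Finset.sdiff_disjoint.mono_left hu.1)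
  rw [this, Finset.card_powersetCard, Finset.card_sdiff_of_subset hab]

lemma mem_razSupp {l n : ℕ}
    (q : (Finset (Fin n) × Finset (Fin n) × Fin n) × Finset (Fin n) × Finset (Fin n)) :
    q ∈ razSupp l n ↔ ValidT l q.1 ∧ q.2.1 ⊆ insert q.1.2.2 q.1.1 ∧ q.2.1.card = l ∧
      q.2.2 ⊆ insert q.1.2.2 q.1.2.1 ∧ q.2.2.card = l := by
  simp [razSupp]

lemma t2_eq {l n : ℕ} (hl : 0 < l) (hn : n = 4 * l - 1)
    {t : Finset (Fin n) × Finset (Fin n) × Fin n} (ht : ValidT l t) :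
    t.2.1 = (insert t.2.2 t.1)ᶜ := by
  obtain ⟨h1, h2, h3, h4, h5⟩ := ht
  have hins : (insert t.2.2 t.1).card = 2 * l := by
    rw [Finset.card_insert_of_notMem h4, h1]; omega
  have hsub : t.2.1 ⊆ (insert t.2.2 t.1)ᶜ := by
    intro a ha
    simp only [Finset.mem_compl, Finset.mem_insert, not_or]
    exact ⟨fun h => h5 (h ▸ ha), fun h => (Finset.disjoint_right.mp h3 ha) h⟩
  have hcard : ((insert t.2.2 t.1)ᶜ).card = 2 * l - 1 := by
    rw [Finset.card_compl, hins, Fintype.card_fin]; omega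
  exact Finset.eq_of_subset_of_card_le hsub (by rw [hcard, h2])

lemma fiber_card {l n : ℕ} (hl : 0 < l) (hn : n = 4 * l - 1)
    (x y : Finset (Fin n)) (hd : Disjoint x y) (hx : x.card = l) (hy : y.card = l) (i : Fin n) :
    (Finset.univ.filter (fun t : Finset (Fin n) × Finset (Fin n) × Fin n =>
        (t, x, y) ∈ razSupp l n ∧ t.2.2 = i)).card
      = if i ∈ x then (2*l-1).choose l else if i ∈ y then (2*l-1).choose (l-1)
        else (2*l-2).choose (l-1) := by
  have hix_iy : i ∈ x → i ∉ y := fun h => Finset.disjoint_left.mp hd h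
  have hab : x.erase i ⊆ (insert i (y.erase i))ᶜ := by
    intro a ha
    rw [Finset.mem_erase] at ha
    simp only [Finset.mem_compl, Finset.mem_insert, Finset.mem_erase, not_or, not_and]
    exact ⟨ha.1, fun _ hay => (Finset.disjoint_left.mp hd ha.2) hay⟩
  have key : (Finset.univ.filter (fun t : Finset (Fin n) × Finset (Fin n) × Fin n =>
        (t, x, y) ∈ razSupp l n ∧ t.2.2 = i)).card
      = (Finset.univ.filter (fun s : Finset (Fin n) =>
          x.erase i ⊆ s ∧ s ⊆ (insert i (y.erase i))ᶜ ∧ s.card = 2*l-1)).card := by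
    refine Finset.card_bij' (fun t _ => t.1) (fun s _ => (s, (insert i s)ᶜ, i)) ?hi ?hj ?left ?right
    case hi =>
      intro t ht
      simp only [Finset.mem_filter, Finset.mem_univ, true_and] at ht
      obtain ⟨hm, hti⟩ := ht
      rw [mem_razSupp] at hm
      obtain ⟨hv, hxs, -, hys, -⟩ := hm
      subst hti
      obtain ⟨h1, h2, h3, h4, h5⟩ := hv
      simp only [Finset.mem_filter, Finset.mem_univ, true_and]
      refine ⟨Finset.subset_insert_iff.mp hxs, ?_, h1⟩
      intro a ha
      simp only [Finset.mem_compl, Finset.mem_insert, not_or]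
      refine ⟨fun h => h4 (h ▸ ha), fun hay => ?_⟩
      exact (Finset.disjoint_left.mp h3 ha) (Finset.subset_insert_iff.mp hys hay)
    case hj =>
      intro s hs
      simp only [Finset.mem_filter, Finset.mem_univ, true_and] at hs
      obtain ⟨hxs, hsb, hcard⟩ := hs
      have his : i ∉ s := fun h => by
        have := hsb h; simp [Finset.mem_compl] at this
      simp only [Finset.mem_filter, Finset.mem_univ, true_and, mem_razSupp]
      refine ⟨⟨⟨hcard, ?_, ?_, his, ?_⟩, ?_, hx, ?_, hy⟩, trivial⟩
      · rw [Finset.card_compl, Finset.card_insert_of_notMem his, Fintype.card_fin, hcard]; omega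
      · exact disjoint_compl_right.mono_left (Finset.subset_insert i s)
      · simp
      · exact Finset.subset_insert_iff.mpr hxs
      · rw [Finset.subset_insert_iff]
        intro a ha
        rw [Finset.mem_erase] at ha
        simp only [Finset.mem_compl, Finset.mem_insert, not_or]
        refine ⟨ha.1, fun has => ?_⟩
        have := hsb has
        simp only [Finset.mem_compl, Finset.mem_insert, not_or, Finset.mem_erase, not_and] at this
        exact this.2 ha.1 ha.2
    case left =>
      intro t ht
      simp only [Finset.mem_filter, Finset.mem_univ, true_and] at ht
      obtain ⟨hm, hti⟩ := ht
      rw [mem_razSupp] at hm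
      have h2 := t2_eq hl hn hm.1
      dsimp only at h2 ⊢
      rw [hti] at h2
      rw [← h2, ← hti]
    case right =>
      intro s hs; rfl
  rw [key, card_sandwich _ _ hab]
  · have hbc : ((insert i (y.erase i))ᶜ).card = n - (1 + (y.erase i).card) := by
      rw [Finset.card_compl, Fintype.card_fin, Finset.card_insert_of_notMem (Finset.notMem_erase i y)]
      omega
    by_cases hix : i ∈ x
    · have hiy := hix_iy hix
      rw [if_pos hix]
      rw [Finset.card_erase_of_mem hix, hx, Finset.erase_eq_of_notMem hiy, hy] at *
      rw [hbc]
      congr 1 <;> omega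
    · rw [if_neg hix, Finset.erase_eq_of_notMem hix, hx] at *
      by_cases hiy : i ∈ y
      · rw [if_pos hiy, Finset.card_erase_of_mem hiy, hy] at *
        rw [hbc]
        congr 1 <;> omega
      · rw [if_neg hiy, Finset.erase_eq_of_notMem hiy, hy] at *
        rw [hbc]
        congr 1 <;> omega
  · by_cases hix : i ∈ x
    · rw [Finset.card_erase_of_mem hix, hx]; omega
    · rw [Finset.erase_eq_of_notMem hix, hx]; omega

lemma sum_if_mem {α : Type*} [Fintype α] [DecidableEq α] (x y : Finset α) (hd : Disjoint x y)
    (c1 c2 c3 : ℕ) :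
    ∑ i : α, (if i ∈ x then c1 else if i ∈ y then c2 else c3)
      = x.card * c1 + y.card * c2 + (Fintype.card α - (x.card + y.card)) * c3 := by
  have hu : (Finset.univ : Finset α) = (x ∪ y) ∪ (x ∪ y)ᶜ := (Finset.union_compl _).symm
  rw [hu, Finset.sum_union disjoint_compl_right, Finset.sum_union hd]
  have e1 : ∑ i ∈ x, (if i ∈ x then c1 else if i ∈ y then c2 else c3) = x.card * c1 := by
    rw [Finset.sum_congr rfl (fun i hi => if_pos hi), Finset.sum_const, smul_eq_mul]
  have e2 : ∑ i ∈ y, (if i ∈ x then c1 else if i ∈ y then c2 else c3) = y.card * c2 := by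
    rw [Finset.sum_congr rfl (fun i hi => by
      rw [if_neg (fun h => Finset.disjoint_left.mp hd h hi), if_pos hi]),
      Finset.sum_const, smul_eq_mul]
  have e3 : ∑ i ∈ (x ∪ y)ᶜ, (if i ∈ x then c1 else if i ∈ y then c2 else c3)
      = (Fintype.card α - (x.card + y.card)) * c3 := by
    have hc : ∀ i ∈ (x ∪ y)ᶜ, (if i ∈ x then c1 else if i ∈ y then c2 else c3) = c3 := by
      intro i hi
      rw [Finset.mem_compl, Finset.mem_union, not_or] at hi
      rw [if_neg hi.1, if_neg hi.2]
    rw [Finset.sum_congr rfl hc, Finset.sum_const, smul_eq_mul,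
      Finset.card_compl, Finset.card_union_of_disjoint hd]
  rw [e1, e2, e3]

lemma choose_id (l : ℕ) (hl : 0 < l) :
    l * ((2*l-1).choose l) + l * ((2*l-1).choose (l-1)) + (2*l-1) * ((2*l-2).choose (l-1))
      = 3 * ((2*l-1) * ((2*l-2).choose (l-1))) := by
  obtain ⟨m, rfl⟩ : ∃ m, l = m + 1 := ⟨l - 1, by omega⟩
  have e1 : 2*(m+1)-1 = 2*m+1 := by omega
  have e2 : 2*(m+1)-2 = 2*m := by omega
  have e3 : (m+1)-1 = m := by omega
  rw [e1, e2, e3]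
  have hsymm : (2*m+1).choose (m+1) = (2*m+1).choose m := by
    rw [← Nat.choose_symm (by omega : m+1 ≤ 2*m+1)]
    congr 1
    omega
  have hkey : (2*m+1) * ((2*m).choose m) = (2*m+1).choose (m+1) * (m+1) := by
    have := Nat.add_one_mul_choose_eq (2*m) m
    simpa [Nat.succ_eq_add_one] using this
  rw [hsymm] at hkey ⊢
  rw [hkey]
  ring

def Ncnt (l n : ℕ) (p : Finset (Fin n) × Finset (Fin n)) : ℕ :=
  ((Finset.univ : Finset (Finset (Fin n) × Finset (Fin n) × Fin n)).filter
    (fun t => (t, p.1, p.2) ∈ razSupp l n)).card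

def NnoI (l n : ℕ) (p : Finset (Fin n) × Finset (Fin n)) : ℕ :=
  ((Finset.univ : Finset (Finset (Fin n) × Finset (Fin n) × Fin n)).filter
    (fun t => (t, p.1, p.2) ∈ razSupp l n ∧ t.2.2 ∉ p.1 ∧ t.2.2 ∉ p.2)).card

lemma Ncnt_good {l n : ℕ} (hl : 0 < l) (hn : n = 4 * l - 1)
    (p : Finset (Fin n) × Finset (Fin n)) (h1 : p.1 ∩ p.2 = ∅)
    (h2 : p.1.card = l) (h3 : p.2.card = l) :
    Ncnt l n p = 3 * ((2*l-1) * ((2*l-2).choose (l-1))) := by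
  have hd : Disjoint p.1 p.2 := Finset.disjoint_iff_inter_eq_empty.mpr h1
  unfold Ncnt
  rw [Finset.card_eq_sum_card_fiberwise
    (f := fun t : Finset (Fin n) × Finset (Fin n) × Fin n => t.2.2)
    (t := Finset.univ) (fun _ _ => Finset.mem_univ _)]
  have step : ∀ i : Fin n,
      (Finset.filter (fun t : Finset (Fin n) × Finset (Fin n) × Fin n => t.2.2 = i)
        (Finset.univ.filter (fun t => (t, p.1, p.2) ∈ razSupp l n))).card
      = if i ∈ p.1 then (2*l-1).choose l else if i ∈ p.2 then (2*l-1).choose (l-1)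
        else (2*l-2).choose (l-1) := by
    intro i
    rw [Finset.filter_filter]
    exact fiber_card hl hn p.1 p.2 hd h2 h3 i
  rw [Finset.sum_congr rfl (fun i _ => step i), sum_if_mem p.1 p.2 hd, h2, h3,
    Fintype.card_fin, hn]
  have e : 4 * l - 1 - (l + l) = 2*l-1 := by omega
  rw [e]
  exact choose_id l hl

lemma Ncnt_zero {l n : ℕ} (p : Finset (Fin n) × Finset (Fin n))
    (h : ¬(p.1.card = l ∧ p.2.card = l)) : Ncnt l n p = 0 := by
  unfold Ncnt
  rw [Finset.card_eq_zero, Finset.filter_eq_empty_iff]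
  intro t _
  rw [mem_razSupp]
  tauto

lemma NnoI_good {l n : ℕ} (hl : 0 < l) (hn : n = 4 * l - 1)
    (p : Finset (Fin n) × Finset (Fin n)) (h1 : p.1 ∩ p.2 = ∅)
    (h2 : p.1.card = l) (h3 : p.2.card = l) :
    NnoI l n p = (2*l-1) * ((2*l-2).choose (l-1)) := by
  have hd : Disjoint p.1 p.2 := Finset.disjoint_iff_inter_eq_empty.mpr h1
  unfold NnoI
  rw [Finset.card_eq_sum_card_fiberwise
    (f := fun t : Finset (Fin n) × Finset (Fin n) × Fin n => t.2.2)
    (t := Finset.univ) (fun _ _ => Finset.mem_univ _)]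
  have step : ∀ i : Fin n,
      (Finset.filter (fun t : Finset (Fin n) × Finset (Fin n) × Fin n => t.2.2 = i)
        (Finset.univ.filter
          (fun t => (t, p.1, p.2) ∈ razSupp l n ∧ t.2.2 ∉ p.1 ∧ t.2.2 ∉ p.2))).card
      = if i ∈ p.1 then 0 else if i ∈ p.2 then 0 else (2*l-2).choose (l-1) := by
    intro i
    rw [Finset.filter_filter]
    by_cases hix : i ∈ p.1
    · rw [if_pos hix, Finset.card_eq_zero, Finset.filter_eq_empty_iff]
      rintro t - ⟨⟨-, hnx, -⟩, hti⟩
      exact hnx (hti ▸ hix)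
    · rw [if_neg hix]
      by_cases hiy : i ∈ p.2
      · rw [if_pos hiy, Finset.card_eq_zero, Finset.filter_eq_empty_iff]
        rintro t - ⟨⟨-, -, hny⟩, hti⟩
        exact hny (hti ▸ hiy)
      · rw [if_neg hiy]
        have : (Finset.univ.filter
            (fun t : Finset (Fin n) × Finset (Fin n) × Fin n =>
              ((t, p.1, p.2) ∈ razSupp l n ∧ t.2.2 ∉ p.1 ∧ t.2.2 ∉ p.2) ∧ t.2.2 = i))
            = Finset.univ.filter (fun t => (t, p.1, p.2) ∈ razSupp l n ∧ t.2.2 = i) := by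
          apply Finset.filter_congr
          intro t ht
          constructor
          · rintro ⟨⟨hm, -, -⟩, hti⟩; exact ⟨hm, hti⟩
          · rintro ⟨hm, hti⟩; exact ⟨⟨hm, hti ▸ hix, hti ▸ hiy⟩, hti⟩
        rw [this]
        have := fiber_card hl hn p.1 p.2 hd h2 h3 i
        rw [this, if_neg hix, if_neg hiy]
  rw [Finset.sum_congr rfl (fun i _ => step i), sum_if_mem p.1 p.2 hd, h2, h3,
    Fintype.card_fin, hn]
  have e : 4 * l - 1 - (l + l) = 2*l-1 := by omega
  rw [e]
  ring

lemma NnoI_zero {l n : ℕ} (p : Finset (Fin n) × Finset (Fin n))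
    (h : ¬(p.1 ∩ p.2 = ∅ ∧ p.1.card = l ∧ p.2.card = l)) : NnoI l n p = 0 := by
  unfold NnoI
  rw [Finset.card_eq_zero, Finset.filter_eq_empty_iff]
  rintro t - ⟨hm, hnx, hny⟩
  rw [mem_razSupp] at hm
  obtain ⟨⟨-, -, hdisj, -, -⟩, hxs, hxc, hys, hyc⟩ := hm
  apply h
  refine ⟨?_, hxc, hyc⟩
  have hx1 : p.1 ⊆ t.1 := by
    intro a ha
    rcases Finset.mem_insert.mp (hxs ha) with h' | h'
    · exact absurd (h' ▸ ha) hnx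
    · exact h'
  have hy1 : p.2 ⊆ t.2.1 := by
    intro a ha
    rcases Finset.mem_insert.mp (hys ha) with h' | h'
    · exact absurd (h' ▸ ha) hny
    · exact h'
  exact Finset.disjoint_iff_inter_eq_empty.mp (hdisj.mono hx1 hy1)

lemma sum_razDist (l n : ℕ) (p : Finset (Fin n) × Finset (Fin n)) :
    ∑ t : Finset (Fin n) × Finset (Fin n) × Fin n, razDist l n (t, p.1, p.2)
      = (Ncnt l n p : ℝ) / ((razSupp l n).card : ℝ) := by
  unfold razDist Ncnt
  rw [← Finset.sum_filter, Finset.sum_const, nsmul_eq_mul]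
  ring

lemma sum_razDist_noI (l n : ℕ) (p : Finset (Fin n) × Finset (Fin n)) :
    ∑ t : Finset (Fin n) × Finset (Fin n) × Fin n,
      (if t.2.2 ∉ p.1 ∧ t.2.2 ∉ p.2 then razDist l n (t, p.1, p.2) else 0)
      = (NnoI l n p : ℝ) / ((razSupp l n).card : ℝ) := by
  unfold razDist NnoI
  have : ∀ t : Finset (Fin n) × Finset (Fin n) × Fin n,
      (if t.2.2 ∉ p.1 ∧ t.2.2 ∉ p.2 then
        (if (t, p.1, p.2) ∈ razSupp l n then 1 / ((razSupp l n).card : ℝ) else 0) else 0)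
      = if (t, p.1, p.2) ∈ razSupp l n ∧ t.2.2 ∉ p.1 ∧ t.2.2 ∉ p.2 then
          1 / ((razSupp l n).card : ℝ) else 0 := by
    intro t
    by_cases h1 : t.2.2 ∉ p.1 ∧ t.2.2 ∉ p.2 <;> by_cases h2 : (t, p.1, p.2) ∈ razSupp l n <;>
      simp [h1, h2]
  rw [Finset.sum_congr rfl (fun t _ => this t), ← Finset.sum_filter, Finset.sum_const,
    nsmul_eq_mul]
  ring

lemma inner_disj {l n : ℕ} (hl : 0 < l) (hn : n = 4 * l - 1)
    (p : Finset (Fin n) × Finset (Fin n)) :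
    (∑ t : Finset (Fin n) × Finset (Fin n) × Fin n,
        if p.1 ∩ p.2 = ∅ then razDist l n (t, p.1, p.2) else 0)
      = if p.1 ∩ p.2 = ∅ ∧ p.1.card = l ∧ p.2.card = l then
          ((3 * ((2*l-1) * ((2*l-2).choose (l-1))) : ℕ) : ℝ) / ((razSupp l n).card : ℝ) else 0 := by
  by_cases hdp : p.1 ∩ p.2 = ∅
  · rw [Finset.sum_congr rfl (fun t _ => if_pos hdp), sum_razDist]
    by_cases hc : p.1.card = l ∧ p.2.card = l
    · rw [if_pos ⟨hdp, hc⟩, Ncnt_good hl hn p hdp hc.1 hc.2]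
    · rw [if_neg (by tauto), Ncnt_zero p hc]
      simp
  · rw [Finset.sum_congr rfl (fun t _ => if_neg hdp), if_neg (by tauto), Finset.sum_const,
      smul_zero]

lemma inner_noI {l n : ℕ} (hl : 0 < l) (hn : n = 4 * l - 1)
    (p : Finset (Fin n) × Finset (Fin n)) :
    (∑ t : Finset (Fin n) × Finset (Fin n) × Fin n,
        if t.2.2 ∉ p.1 ∧ t.2.2 ∉ p.2 then razDist l n (t, p.1, p.2) else 0)
      = if p.1 ∩ p.2 = ∅ ∧ p.1.card = l ∧ p.2.card = l then
          ((((2*l-1) * ((2*l-2).choose (l-1))) : ℕ) : ℝ) / ((razSupp l n).card : ℝ) else 0 := by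
  rw [sum_razDist_noI]
  by_cases hg : p.1 ∩ p.2 = ∅ ∧ p.1.card = l ∧ p.2.card = l
  · rw [if_pos hg, NnoI_good hl hn p hg.1 hg.2.1 hg.2.2]
  · rw [if_neg hg, NnoI_zero p hg]
    simp


lemma prDisj_eq {l n : ℕ} (hl : 0 < l) (hn : n = 4 * l - 1) :
    prDisj l n = ((Finset.univ.filter (fun p : Finset (Fin n) × Finset (Fin n) =>
        p.1 ∩ p.2 = ∅ ∧ p.1.card = l ∧ p.2.card = l)).card : ℝ)
      * (((3 * ((2*l-1) * ((2*l-2).choose (l-1))) : ℕ) : ℝ) / ((razSupp l n).card : ℝ)) := by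
  have h1 : prDisj l n = ∑ p : Finset (Fin n) × Finset (Fin n),
      ∑ t : Finset (Fin n) × Finset (Fin n) × Fin n,
        (if p.1 ∩ p.2 = ∅ then razDist l n (t, p.1, p.2) else 0) := by
    unfold prDisj
    rw [Fintype.sum_prod_type]
    exact Finset.sum_comm
  rw [h1, Finset.sum_congr rfl (fun p _ => inner_disj hl hn p), ← Finset.sum_filter,
    Finset.sum_const, nsmul_eq_mul]

lemma prNoI_eq {l n : ℕ} (hl : 0 < l) (hn : n = 4 * l - 1) :
    prNoI l n = ((Finset.univ.filter (fun p : Finset (Fin n) × Finset (Fin n) =>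
        p.1 ∩ p.2 = ∅ ∧ p.1.card = l ∧ p.2.card = l)).card : ℝ)
      * (((((2*l-1) * ((2*l-2).choose (l-1))) : ℕ) : ℝ) / ((razSupp l n).card : ℝ)) := by
  have h1 : prNoI l n = ∑ p : Finset (Fin n) × Finset (Fin n),
      ∑ t : Finset (Fin n) × Finset (Fin n) × Fin n,
        (if t.2.2 ∉ p.1 ∧ t.2.2 ∉ p.2 then razDist l n (t, p.1, p.2) else 0) := by
    unfold prNoI
    rw [Fintype.sum_prod_type]
    exact Finset.sum_comm
  rw [h1, Finset.sum_congr rfl (fun p _ => inner_noI hl hn p), ← Finset.sum_filter,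
    Finset.sum_const, nsmul_eq_mul]

lemma D_pos {l n : ℕ} (hl : 0 < l) (hn : n = 4 * l - 1) :
    0 < (Finset.univ.filter (fun p : Finset (Fin n) × Finset (Fin n) =>
        p.1 ∩ p.2 = ∅ ∧ p.1.card = l ∧ p.2.card = l)).card := by
  rw [Finset.card_pos]
  obtain ⟨x, hxu, hxc⟩ := Finset.exists_subset_card_eq
    (show l ≤ (Finset.univ : Finset (Fin n)).card by
      rw [Finset.card_univ, Fintype.card_fin]; omega)
  obtain ⟨y, hyu, hyc⟩ := Finset.exists_subset_card_eq
    (show l ≤ ((Finset.univ : Finset (Fin n)) \ x).card by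
      rw [Finset.card_sdiff_of_subset (Finset.subset_univ x), Finset.card_univ, Fintype.card_fin, hxc]
      omega)
  refine ⟨(x, y), ?_⟩
  simp only [Finset.mem_filter, Finset.mem_univ, true_and]
  refine ⟨Finset.disjoint_iff_inter_eq_empty.mp ?_, hxc, hyc⟩
  exact Finset.disjoint_left.mpr (fun a ha hay => (Finset.mem_sdiff.mp (hyu hay)).2 ha)

lemma S_pos {l n : ℕ} (hl : 0 < l) (hn : n = 4 * l - 1) : 0 < (razSupp l n).card := by
  have hD := D_pos hl hn
  rw [Finset.card_pos] at hD
  obtain ⟨p, hp⟩ := hD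
  simp only [Finset.mem_filter, Finset.mem_univ, true_and] at hp
  have h := Ncnt_good hl hn p hp.1 hp.2.1 hp.2.2
  have hch : 0 < (2*l-2).choose (l-1) := Nat.choose_pos (by omega)
  have hpos : 0 < Ncnt l n p := by
    rw [h]
    exact Nat.mul_pos (by omega) (Nat.mul_pos (by omega) hch)
  unfold Ncnt at hpos
  rw [Finset.card_pos] at hpos
  obtain ⟨t, ht⟩ := hpos
  rw [Finset.mem_filter] at ht
  exact Finset.card_pos.mpr ⟨(t, p.1, p.2), ht.2⟩

/-- For the Razborov distribution with `n = 4l − 1`: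
(i) `Pr[X ∩ Y = ∅] = 3 · Pr[I ∉ X ∧ I ∉ Y]`, and (ii) the conditional distribution
of `(X,Y)` given `{X ∩ Y = ∅}` equals the conditional distribution of `(X,Y)` given
`{I ∉ X ∧ I ∉ Y}` (both being uniform over pairs of disjoint size-`l` subsets). -/
theorem razborov_disjoint_conditioning (l n : ℕ) (hl : 0 < l) (hn : n = 4 * l - 1) :
    prDisj l n = 3 * prNoI l n ∧
    (∀ p : Finset (Fin n) × Finset (Fin n), condDisjXY l n p = condNoIXY l n p) ∧
    (∀ p : Finset (Fin n) × Finset (Fin n), condDisjXY l n p = unifDisjPairs l n p) := by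
  have hBpos : 0 < (2*l-1) * ((2*l-2).choose (l-1)) :=
    Nat.mul_pos (by omega) (Nat.choose_pos (by omega))
  have hDpos := D_pos hl hn
  have hSpos := S_pos hl hn
  have hDr : (0:ℝ) < ((Finset.univ.filter (fun p : Finset (Fin n) × Finset (Fin n) =>
      p.1 ∩ p.2 = ∅ ∧ p.1.card = l ∧ p.2.card = l)).card : ℝ) := by exact_mod_cast hDpos
  have hSr : (0:ℝ) < ((razSupp l n).card : ℝ) := by exact_mod_cast hSpos
  have hBr : (0:ℝ) < (((2*l-1) * ((2*l-2).choose (l-1)) : ℕ) : ℝ) := by exact_mod_cast hBpos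
  have harith : ∀ b d s : ℝ, 0 < b → 0 < d → 0 < s → (b/s) / (d*(b/s)) = 1/d := by
    intro b d s hb hd hs
    rw [mul_comm d (b/s), ← div_div, div_self (by positivity : b/s ≠ 0)]
  have hcondD : ∀ p : Finset (Fin n) × Finset (Fin n),
      condDisjXY l n p = unifDisjPairs l n p := by
    intro p
    unfold condDisjXY unifDisjPairs
    rw [inner_disj hl hn p, prDisj_eq hl hn]
    by_cases hg : p.1 ∩ p.2 = ∅ ∧ p.1.card = l ∧ p.2.card = l
    · rw [if_pos hg, if_pos hg]
      exact harith _ _ _ (by exact_mod_cast Nat.mul_pos (by omega) hBpos) hDr hSr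
    · rw [if_neg hg, if_neg hg, zero_div]
  have hcondN : ∀ p : Finset (Fin n) × Finset (Fin n),
      condNoIXY l n p = unifDisjPairs l n p := by
    intro p
    unfold condNoIXY unifDisjPairs
    rw [inner_noI hl hn p, prNoI_eq hl hn]
    by_cases hg : p.1 ∩ p.2 = ∅ ∧ p.1.card = l ∧ p.2.card = l
    · rw [if_pos hg, if_pos hg]
      exact harith _ _ _ (by exact_mod_cast hBpos) hDr hSr
    · rw [if_neg hg, if_neg hg, zero_div]
  refine ⟨?_, fun p => (hcondD p).trans (hcondN p).symm, hcondD⟩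
  rw [prDisj_eq hl hn, prNoI_eq hl hn]
  rw [show ((3 * ((2*l-1) * ((2*l-2).choose (l-1))) : ℕ) : ℝ)
      = 3 * (((2*l-1) * ((2*l-2).choose (l-1)) : ℕ) : ℝ) by push_cast; ring]
  ring


end
end

section
/- With (T, X, Y) drawn from the Razborov distribution (n = 4l−1) and A, B {0,1}-valued random variables forming the Markov chain A ↔ X ↔ Y ↔ B, it holds that Pr[A = B = 1 and X ∩ Y ≠ ∅] = (1/4)·E_{t=(t₁,t₂,{i})←T}[ Pr[A=1 | T=t, i∈X] · Pr[B=1 | T=t, i∈Y] ]. -/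
open scoped BigOperators ENNReal
open Classical

noncomputable section

variable {n : ℕ}

/-- `Pr[T = t]` under the Razborov distribution. -/
def przT (l n : ℕ) (t : Finset (Fin n) × Finset (Fin n) × Fin n) : ℝ :=
  ∑ p : Finset (Fin n) × Finset (Fin n), razDist l n (t, p.1, p.2)

/-- `Pr[A = 1 ∣ T = t, I ∈ X]`, where `A ↔ X ↔ Y ↔ B` with `Pr[A=1∣X=x] = a x`. -/
def prA1givenInX (l n : ℕ) (a : Finset (Fin n) → ℝ)
    (t : Finset (Fin n) × Finset (Fin n) × Fin n) : ℝ :=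
  (∑ p : Finset (Fin n) × Finset (Fin n),
      if t.2.2 ∈ p.1 then razDist l n (t, p.1, p.2) * a p.1 else 0) /
  (∑ p : Finset (Fin n) × Finset (Fin n),
      if t.2.2 ∈ p.1 then razDist l n (t, p.1, p.2) else 0)

/-- `Pr[B = 1 ∣ T = t, I ∈ Y]`, where `A ↔ X ↔ Y ↔ B` with `Pr[B=1∣Y=y] = b y`. -/
def prB1givenInY (l n : ℕ) (b : Finset (Fin n) → ℝ)
    (t : Finset (Fin n) × Finset (Fin n) × Fin n) : ℝ :=
  (∑ p : Finset (Fin n) × Finset (Fin n),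
      if t.2.2 ∈ p.2 then razDist l n (t, p.1, p.2) * b p.2 else 0) /
  (∑ p : Finset (Fin n) × Finset (Fin n),
      if t.2.2 ∈ p.2 then razDist l n (t, p.1, p.2) else 0)

/-- `Pr[A = 1 ∣ T = t, I ∉ X]`. -/
def prA1givenNotInX (l n : ℕ) (a : Finset (Fin n) → ℝ)
    (t : Finset (Fin n) × Finset (Fin n) × Fin n) : ℝ :=
  (∑ p : Finset (Fin n) × Finset (Fin n),
      if t.2.2 ∉ p.1 then razDist l n (t, p.1, p.2) * a p.1 else 0) /
  (∑ p : Finset (Fin n) × Finset (Fin n),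
      if t.2.2 ∉ p.1 then razDist l n (t, p.1, p.2) else 0)

/-- `Pr[B = 1 ∣ T = t, I ∉ Y]`. -/
def prB1givenNotInY (l n : ℕ) (b : Finset (Fin n) → ℝ)
    (t : Finset (Fin n) × Finset (Fin n) × Fin n) : ℝ :=
  (∑ p : Finset (Fin n) × Finset (Fin n),
      if t.2.2 ∉ p.2 then razDist l n (t, p.1, p.2) * b p.2 else 0) /
  (∑ p : Finset (Fin n) × Finset (Fin n),
      if t.2.2 ∉ p.2 then razDist l n (t, p.1, p.2) else 0)

open Classical

lemma choose_double (l : ℕ) (hl : 0 < l) :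
    (2 * l).choose l = 2 * ((2 * l - 1).choose (l - 1)) := by
  obtain ⟨k, rfl⟩ : ∃ k, l = k + 1 := ⟨l - 1, by omega⟩
  have hs : (2 * (k + 1) - 1).choose (k + 1) = (2 * k + 1).choose k := by
    have h := Nat.choose_symm (n := 2 * k + 1) (k := k + 1) (by omega)
    rw [show 2 * k + 1 - (k + 1) = k by omega] at h
    rw [show 2 * (k + 1) - 1 = 2 * k + 1 by omega, ← h]
  have h2 : (2 * (k + 1)).choose (k + 1) = (2 * k + 1).choose k + (2 * k + 1).choose (k + 1) := by
    rw [show 2 * (k + 1) = (2 * k + 1) + 1 by ring]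
    exact Nat.choose_succ_succ _ _
  have h3 : (2 * k + 1).choose (k + 1) = (2 * k + 1).choose k := by
    have h := Nat.choose_symm (n := 2 * k + 1) (k := k + 1) (by omega)
    rw [show 2 * k + 1 - (k + 1) = k by omega] at h
    exact h.symm
  rw [show 2 * (k + 1) - 1 = 2 * k + 1 by omega, show k + 1 - 1 = k by omega, h2, h3]
  ring

lemma card_filter_mem_powersetCard {n : ℕ} (s : Finset (Fin n)) (i : Fin n)
    (hi : i ∉ s) {l : ℕ} (hl : 0 < l) :
    (((insert i s).powersetCard l).filter (fun x => i ∈ x)).card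
      = s.card.choose (l - 1) := by
  have hnot : ((insert i s).powersetCard l).filter (fun x => i ∉ x) = s.powersetCard l := by
    ext x
    simp only [Finset.mem_filter, Finset.mem_powersetCard]
    constructor
    · rintro ⟨⟨hx, hc⟩, hix⟩
      refine ⟨fun j hj => ?_, hc⟩
      rcases Finset.mem_insert.mp (hx hj) with h | h
      · exact absurd (h ▸ hj) hix
      · exact h
    · rintro ⟨hx, hc⟩
      exact ⟨⟨hx.trans (Finset.subset_insert _ _), hc⟩, fun h => hi (hx h)⟩
  have hsplit := Finset.card_filter_add_card_filter_not
    (s := (insert i s).powersetCard l) (p := fun x => i ∈ x)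
  rw [hnot, Finset.card_powersetCard, Finset.card_powersetCard,
    Finset.card_insert_of_notMem hi] at hsplit
  have hp : (s.card + 1).choose l = s.card.choose (l - 1) + s.card.choose l := by
    obtain ⟨k, rfl⟩ : ∃ k, l = k + 1 := ⟨l - 1, by omega⟩
    simpa using Nat.choose_succ_succ s.card k
  omega

lemma inter_iff {n : ℕ} {t1 t2 x y : Finset (Fin n)} {i : Fin n}
    (hd : Disjoint t1 t2) (hx : x ⊆ insert i t1) (hy : y ⊆ insert i t2) :
    x ∩ y ≠ ∅ ↔ i ∈ x ∧ i ∈ y := by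
  constructor
  · intro h
    obtain ⟨j, hj⟩ := Finset.nonempty_iff_ne_empty.mpr h
    have hjx := Finset.mem_inter.mp hj
    have hji : j = i := by
      by_contra hne
      have ha : j ∈ t1 := by
        rcases Finset.mem_insert.mp (hx hjx.1) with h' | h'
        · exact absurd h' hne
        · exact h'
      have hb : j ∈ t2 := by
        rcases Finset.mem_insert.mp (hy hjx.2) with h' | h'
        · exact absurd h' hne
        · exact h'
      exact Finset.disjoint_left.mp hd ha hb
    exact ⟨hji ▸ hjx.1, hji ▸ hjx.2⟩
  · rintro ⟨h1, h2⟩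
    exact Finset.nonempty_iff_ne_empty.mp ⟨i, Finset.mem_inter.mpr ⟨h1, h2⟩⟩
lemma per_t (l : ℕ) {n : ℕ} (hl : 0 < l) (hN : (razSupp l n).card ≠ 0)
    (a b : Finset (Fin n) → ℝ) (t : Finset (Fin n) × Finset (Fin n) × Fin n) :
    (∑ x : Finset (Fin n), ∑ y : Finset (Fin n),
        if x ∩ y ≠ ∅ then razDist l n (t, x, y) * a x * b y else 0) =
      (1 / 4) * (przT l n t * (prA1givenInX l n a t * prB1givenInY l n b t)) := by
  classical
  by_cases hv : ValidT l t
  case neg =>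
    have hz : ∀ x y, razDist l n (t, x, y) = 0 := by
      intro x y
      unfold razDist
      rw [if_neg]
      intro h
      rw [razSupp, Finset.mem_filter] at h
      exact hv h.2.1
    have hT : przT l n t = 0 := by
      unfold przT; simp [hz]
    simp [hz, hT]
  case pos =>
  obtain ⟨h1, h2, hd, hi1, hi2⟩ := hv
  set i := t.2.2 with hidef
  set Px := (insert i t.1).powersetCard l with hPx
  set Py := (insert i t.2.1).powersetCard l with hPy
  set D := 1 / ((razSupp l n).card : ℝ) with hDdef
  have hD : D ≠ 0 := by
    rw [hDdef]
    positivity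
  have hrz : ∀ x y, razDist l n (t, x, y) =
      if x ∈ Px ∧ y ∈ Py then D else 0 := by
    intro x y
    unfold razDist razSupp
    simp only [Finset.mem_filter, Finset.mem_univ, true_and, hPx, hPy,
      Finset.mem_powersetCard]
    apply if_congr _ rfl rfl
    constructor
    · rintro ⟨_, h⟩; tauto
    · intro h; exact ⟨⟨h1, h2, hd, hi1, hi2⟩, h.1.1, h.1.2, h.2.1, h.2.2⟩
  set m := (2 * l - 1).choose (l - 1) with hmdef
  have hm0 : m ≠ 0 := (Nat.choose_pos (by omega)).ne'
  have hcx : (Px.card : ℝ) = 2 * (m : ℝ) := by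
    rw [hPx, Finset.card_powersetCard, Finset.card_insert_of_notMem hi1, h1,
      show 2 * l - 1 + 1 = 2 * l by omega, choose_double l hl]
    push_cast; ring
  have hcy : (Py.card : ℝ) = 2 * (m : ℝ) := by
    rw [hPy, Finset.card_powersetCard, Finset.card_insert_of_notMem hi2, h2,
      show 2 * l - 1 + 1 = 2 * l by omega, choose_double l hl]
    push_cast; ring
  have hmx : ((Px.filter (fun x => i ∈ x)).card : ℝ) = (m : ℝ) := by
    rw [hPx, card_filter_mem_powersetCard t.1 i hi1 hl, h1]
  have hmy : ((Py.filter (fun y => i ∈ y)).card : ℝ) = (m : ℝ) := by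
    rw [hPy, card_filter_mem_powersetCard t.2.1 i hi2 hl, h2]
  set SA := ∑ x ∈ Px.filter (fun x => i ∈ x), a x with hSA
  set SB := ∑ y ∈ Py.filter (fun y => i ∈ y), b y with hSB
  -- generic sums
  have sumIte : ∀ (P : Finset (Finset (Fin n))) (f : Finset (Fin n) → ℝ),
      (∑ x : Finset (Fin n), if x ∈ P then f x else 0) = ∑ x ∈ P, f x := by
    intro P f
    rw [Finset.sum_ite_mem, Finset.univ_inter]
  have sumIteAnd : ∀ (P : Finset (Finset (Fin n))) (f : Finset (Fin n) → ℝ),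
      (∑ x : Finset (Fin n), if x ∈ P ∧ i ∈ x then f x else 0)
        = ∑ x ∈ P.filter (fun x => i ∈ x), f x := by
    intro P f
    rw [← sumIte (P.filter (fun x => i ∈ x)) f]
    apply Finset.sum_congr rfl
    intro x _
    apply if_congr _ rfl rfl
    simp [Finset.mem_filter]
  have sumConst : ∀ (P : Finset (Finset (Fin n))) (c : ℝ),
      (∑ x : Finset (Fin n), if x ∈ P then c else 0) = (P.card : ℝ) * c := by
    intro P c
    rw [sumIte, Finset.sum_const, nsmul_eq_mul]
  have sumConstAnd : ∀ (P : Finset (Finset (Fin n))) (c : ℝ),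
      (∑ x : Finset (Fin n), if x ∈ P ∧ i ∈ x then c else 0)
        = ((P.filter (fun x => i ∈ x)).card : ℝ) * c := by
    intro P c
    rw [sumIteAnd, Finset.sum_const, nsmul_eq_mul]
  -- LHS
  have hLHS : (∑ x : Finset (Fin n), ∑ y : Finset (Fin n),
        if x ∩ y ≠ ∅ then razDist l n (t, x, y) * a x * b y else 0)
      = SA * (D * SB) := by
    have : (∑ x : Finset (Fin n), ∑ y : Finset (Fin n),
          if x ∩ y ≠ ∅ then razDist l n (t, x, y) * a x * b y else 0)
        = (∑ x : Finset (Fin n), if x ∈ Px ∧ i ∈ x then a x else 0) *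
          (∑ y : Finset (Fin n), if y ∈ Py ∧ i ∈ y then D * b y else 0) := by
      rw [Finset.sum_mul_sum]
      apply Finset.sum_congr rfl
      intro x _
      apply Finset.sum_congr rfl
      intro y _
      rw [hrz]
      by_cases hx : x ∈ Px <;> by_cases hy : y ∈ Py
      · have hiff := inter_iff hd (Finset.mem_powersetCard.mp hx).1
          (Finset.mem_powersetCard.mp hy).1
        by_cases hix : i ∈ x <;> by_cases hiy : i ∈ y <;>
          simp [hiff, hx, hy, hix, hiy] <;> ring
      · simp [hx, hy]
      · simp [hx, hy]
      · simp [hx, hy]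
    rw [this, sumIteAnd, sumIteAnd, ← Finset.mul_sum]
  -- przT
  have hP : przT l n t = (Px.card : ℝ) * ((Py.card : ℝ) * D) := by
    unfold przT
    rw [Fintype.sum_prod_type]
    have : (∑ x : Finset (Fin n), ∑ y : Finset (Fin n), razDist l n (t, x, y))
        = (∑ x : Finset (Fin n), if x ∈ Px then (1:ℝ) else 0) *
          (∑ y : Finset (Fin n), if y ∈ Py then D else 0) := by
      rw [Finset.sum_mul_sum]
      apply Finset.sum_congr rfl
      intro x _
      apply Finset.sum_congr rfl
      intro y _
      rw [hrz]
      by_cases hx : x ∈ Px <;> by_cases hy : y ∈ Py <;> simp [hx, hy]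
    rw [this, sumConst, sumConst]
    ring
  -- prA1
  have hA : prA1givenInX l n a t = SA / (m : ℝ) := by
    unfold prA1givenInX
    rw [Fintype.sum_prod_type, Fintype.sum_prod_type]
    have hnum : (∑ x : Finset (Fin n), ∑ y : Finset (Fin n),
          if i ∈ x then razDist l n (t, x, y) * a x else 0)
        = SA * ((Py.card : ℝ) * D) := by
      have : (∑ x : Finset (Fin n), ∑ y : Finset (Fin n),
            if i ∈ x then razDist l n (t, x, y) * a x else 0)
          = (∑ x : Finset (Fin n), if x ∈ Px ∧ i ∈ x then a x else 0) *
            (∑ y : Finset (Fin n), if y ∈ Py then D else 0) := by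
        rw [Finset.sum_mul_sum]
        apply Finset.sum_congr rfl
        intro x _
        apply Finset.sum_congr rfl
        intro y _
        rw [hrz]
        by_cases hx : x ∈ Px <;> by_cases hy : y ∈ Py <;>
          by_cases hix : i ∈ x <;> simp [hx, hy, hix] <;> ring
      rw [this, sumIteAnd, sumConst]
    have hden : (∑ x : Finset (Fin n), ∑ y : Finset (Fin n),
          if i ∈ x then razDist l n (t, x, y) else 0)
        = (m : ℝ) * ((Py.card : ℝ) * D) := by
      have : (∑ x : Finset (Fin n), ∑ y : Finset (Fin n),
            if i ∈ x then razDist l n (t, x, y) else 0)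
          = (∑ x : Finset (Fin n), if x ∈ Px ∧ i ∈ x then (1:ℝ) else 0) *
            (∑ y : Finset (Fin n), if y ∈ Py then D else 0) := by
        rw [Finset.sum_mul_sum]
        apply Finset.sum_congr rfl
        intro x _
        apply Finset.sum_congr rfl
        intro y _
        rw [hrz]
        by_cases hx : x ∈ Px <;> by_cases hy : y ∈ Py <;>
          by_cases hix : i ∈ x <;> simp [hx, hy, hix]
      rw [this, sumConstAnd, hmx, sumConst]
      ring
    rw [hnum, hden]
    have hc : (Py.card : ℝ) * D ≠ 0 := by
      apply mul_ne_zero _ hD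
      rw [hcy]
      positivity
    rw [mul_div_mul_right _ _ hc]
  -- prB1
  have hB : prB1givenInY l n b t = SB / (m : ℝ) := by
    unfold prB1givenInY
    rw [Fintype.sum_prod_type, Fintype.sum_prod_type]
    have hnum : (∑ x : Finset (Fin n), ∑ y : Finset (Fin n),
          if i ∈ y then razDist l n (t, x, y) * b y else 0)
        = ((Px.card : ℝ) * 1) * (D * SB) := by
      have : (∑ x : Finset (Fin n), ∑ y : Finset (Fin n),
            if i ∈ y then razDist l n (t, x, y) * b y else 0)
          = (∑ x : Finset (Fin n), if x ∈ Px then (1:ℝ) else 0) *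
            (∑ y : Finset (Fin n), if y ∈ Py ∧ i ∈ y then D * b y else 0) := by
        rw [Finset.sum_mul_sum]
        apply Finset.sum_congr rfl
        intro x _
        apply Finset.sum_congr rfl
        intro y _
        rw [hrz]
        by_cases hx : x ∈ Px <;> by_cases hy : y ∈ Py <;>
          by_cases hiy : i ∈ y <;> simp [hx, hy, hiy] <;> ring
      rw [this, sumConst, sumIteAnd, ← Finset.mul_sum]
    have hden : (∑ x : Finset (Fin n), ∑ y : Finset (Fin n),
          if i ∈ y then razDist l n (t, x, y) else 0)
        = ((Px.card : ℝ) * 1) * ((m : ℝ) * D) := by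
      have : (∑ x : Finset (Fin n), ∑ y : Finset (Fin n),
            if i ∈ y then razDist l n (t, x, y) else 0)
          = (∑ x : Finset (Fin n), if x ∈ Px then (1:ℝ) else 0) *
            (∑ y : Finset (Fin n), if y ∈ Py ∧ i ∈ y then D else 0) := by
        rw [Finset.sum_mul_sum]
        apply Finset.sum_congr rfl
        intro x _
        apply Finset.sum_congr rfl
        intro y _
        rw [hrz]
        by_cases hx : x ∈ Px <;> by_cases hy : y ∈ Py <;>
          by_cases hiy : i ∈ y <;> simp [hx, hy, hiy]
      rw [this, sumConst, sumConstAnd, hmy]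
    rw [hnum, hden]
    have hc : (Px.card : ℝ) * 1 ≠ 0 := by
      rw [hcx]
      positivity
    rw [mul_div_mul_left _ _ hc, mul_comm D SB]
    exact mul_div_mul_right _ _ hD
  rw [hLHS, hP, hA, hB, hcx, hcy]
  have hm : (m : ℝ) ≠ 0 := Nat.cast_ne_zero.mpr hm0
  field_simp
  ring
/-- For `(T,X,Y)` Razborov-distributed (`n = 4l − 1`) and `A, B`
forming the Markov chain `A ↔ X ↔ Y ↔ B` (with `Pr[A=1∣X=x] = a x`,
`Pr[B=1∣Y=y] = b y`):
`Pr[A = B = 1 ∧ X ∩ Y ≠ ∅]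
  = (1/4)·E_{t←T}[ Pr[A=1 ∣ T=t, I∈X] · Pr[B=1 ∣ T=t, I∈Y] ]`. -/
theorem razborov_intersecting_success (l n : ℕ) (hl : 0 < l) (hn : n = 4 * l - 1)
    (a b : Finset (Fin n) → ℝ)
    (ha : ∀ x, 0 ≤ a x ∧ a x ≤ 1) (hb : ∀ y, 0 ≤ b y ∧ b y ≤ 1) :
    (∑ q : (Finset (Fin n) × Finset (Fin n) × Fin n) × Finset (Fin n) × Finset (Fin n),
        if q.2.1 ∩ q.2.2 ≠ ∅ then razDist l n q * a q.2.1 * b q.2.2 else 0) =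
      (1 / 4) * ∑ t : Finset (Fin n) × Finset (Fin n) × Fin n,
        przT l n t * (prA1givenInX l n a t * prB1givenInY l n b t) := by
  classical
  by_cases hN : (razSupp l n).card = 0
  · have hz : ∀ q, razDist l n q = 0 := by
      intro q; unfold razDist; rw [hN]; simp
    have hT : ∀ t, przT l n t = 0 := by
      intro t; unfold przT; simp [hz]
    simp [hz, hT]
  · rw [Fintype.sum_prod_type, Finset.mul_sum]
    apply Finset.sum_congr rfl
    intro t _
    rw [Fintype.sum_prod_type]
    exact per_t l hl hN a b t

end
end

section
/- With (T, X, Y) drawn from the Razborov distribution (n = 4l−1) and A, B {0,1}-valued random variables forming the Markov chain A ↔ X ↔ Y ↔ B, it holds that Pr[A = B = 1 and X ∩ Y = ∅] = (3/4)·E_{t=(t₁,t₂,{i})←T}[ Pr[A=1 | T=t, i∉X] · Pr[B=1 | T=t, i∉Y] ]. -/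
open scoped BigOperators ENNReal
open Classical

noncomputable section

variable {n : ℕ}

/-!
Given `T = t = (t₁, t₂, i)`, `X` and `Y` are independent and uniform on the `l`-subsets of
`t₁ ∪ {i}` and `t₂ ∪ {i}`, and they are disjoint unless both contain `i`. Writing `A₀, A₁` for the
sums of `α` over the `l`-subsets of `t₁ ∪ {i}` avoiding resp. containing `i` (and `B₀, B₁` for `β`),
the disjoint mass at `t` is `A₀B₀ + A₀B₁ + A₁B₀`. After averaging over `T`, `A₁` may be replaced by
`A₀`: once `t₂` is fixed, `i` ranges over the `2l`-set `S = t₂ᶜ` and `t₁ = S \ {i}`, and every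
`l`-subset of `S` contains exactly `l` of the points `i` and avoids the other `l`. So the three
terms contribute equally, while the right-hand side is `4 A₀B₀` per `t` because
`C(2l, l) = 2 C(2l - 1, l)`.
-/

namespace Finset

variable {α M : Type*} [DecidableEq α] [AddCommMonoid M]

theorem powersetCard_erase_eq_filter (l : ℕ) (s : Finset α) (i : α) :
    (s.erase i).powersetCard l = {x ∈ s.powersetCard l | i ∉ x} := by
  ext x
  simp only [mem_powersetCard, mem_filter, subset_erase]
  tauto

theorem filter_notMem_powersetCard_insert {s : Finset α} {i : α} (hi : i ∉ s) (l : ℕ) :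
    {x ∈ (insert i s).powersetCard l | i ∉ x} = s.powersetCard l := by
  rw [← powersetCard_erase_eq_filter, erase_insert hi]

theorem sum_sum_filter_mem_powersetCard (s : Finset α) (l : ℕ) (f : Finset α → M) :
    ∑ i ∈ s, ∑ x ∈ s.powersetCard l with i ∈ x, f x = l • ∑ x ∈ s.powersetCard l, f x := by
  simp only [sum_filter]
  rw [sum_comm, smul_sum]
  refine sum_congr rfl fun x hx => ?_
  rw [mem_powersetCard] at hx
  rw [← sum_filter, sum_const, filter_mem_eq_inter, inter_eq_right.mpr hx.1, hx.2]

theorem sum_sum_powersetCard_erase (s : Finset α) (l : ℕ) (f : Finset α → M) :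
    ∑ i ∈ s, ∑ x ∈ (s.erase i).powersetCard l, f x = (#s - l) • ∑ x ∈ s.powersetCard l, f x := by
  simp only [powersetCard_erase_eq_filter, sum_filter]
  rw [sum_comm, smul_sum]
  refine sum_congr rfl fun x hx => ?_
  rw [mem_powersetCard] at hx
  rw [← sum_filter, sum_const, filter_notMem_eq_sdiff, card_sdiff_of_subset hx.1, hx.2]

theorem inter_eq_empty_iff_of_subset_insert {s t x y : Finset α} {i : α} (hst : Disjoint s t)
    (hx : x ⊆ insert i s) (hy : y ⊆ insert i t) : x ∩ y = ∅ ↔ ¬(i ∈ x ∧ i ∈ y) := by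
  rw [← not_nonempty_iff_eq_empty, not_iff_not]
  refine ⟨fun ⟨z, hz⟩ => ?_, fun h => ⟨i, mem_inter.mpr h⟩⟩
  obtain ⟨hzx, hzy⟩ := mem_inter.mp hz
  rcases mem_insert.mp (hx hzx) with rfl | hzs
  · exact ⟨hzx, hzy⟩
  rcases mem_insert.mp (hy hzy) with rfl | hzt
  · exact ⟨hzx, hzy⟩
  exact absurd hzt (disjoint_left.mp hst hzs)

end Finset

open Finset

theorem Nat.choose_two_mul_eq_two_mul_choose {l : ℕ} (hl : 0 < l) :
    (2 * l).choose l = 2 * (2 * l - 1).choose l := by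
  obtain ⟨k, rfl⟩ : ∃ k, l = k + 1 := ⟨l - 1, by omega⟩
  rw [show 2 * (k + 1) = (2 * k + 1) + 1 by ring, show 2 * k + 1 + 1 - 1 = 2 * k + 1 by omega,
    Nat.choose_succ_succ, Nat.choose_symm_half]
  ring

section

variable {l : ℕ}

theorem validT_iff (hn : n = 4 * l - 1) {t : Finset (Fin n) × Finset (Fin n) × Fin n} :
    ValidT l t ↔ #t.2.1 = 2 * l - 1 ∧ t.2.2 ∉ t.2.1 ∧ t.1 = t.2.1ᶜ.erase t.2.2 := by
  obtain ⟨t₁, t₂, i⟩ := t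
  dsimp only
  have hcard : #t₂ = 2 * l - 1 → i ∉ t₂ → #(t₂ᶜ.erase i) = 2 * l - 1 := fun h2 hi => by
    rw [card_erase_of_mem (mem_compl.mpr hi), card_compl, Fintype.card_fin, h2]
    omega
  constructor
  · rintro ⟨h1, h2, hdisj, hi1, hi2⟩
    refine ⟨h2, hi2, eq_of_subset_of_card_le (fun z hz => ?_) (by rw [hcard h2 hi2, h1])⟩
    exact mem_erase.mpr ⟨fun h => hi1 (h ▸ hz), mem_compl.mpr (disjoint_left.mp hdisj hz)⟩
  · rintro ⟨h2, hi2, rfl⟩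
    exact ⟨hcard h2 hi2, h2, disjoint_left.mpr fun z hz => mem_compl.mp (mem_of_mem_erase hz),
      notMem_erase i _, hi2⟩

theorem sum_validT_eq_sum_sum_compl (hn : n = 4 * l - 1)
    (F : Finset (Fin n) × Finset (Fin n) × Fin n → ℝ) :
    ∑ t with ValidT l t, F t =
      ∑ s ∈ univ.powersetCard (2 * l - 1), ∑ i ∈ sᶜ, F (sᶜ.erase i, s, i) := by
  have hfst : ∀ t ∈ ({t | ValidT l t} : Finset _), (t.2.1ᶜ.erase t.2.2, t.2.1, t.2.2) = t :=
    fun t ht => by rw [← ((validT_iff hn).mp (mem_filter.mp ht).2).2.2]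
  rw [sum_sigma']
  refine sum_nbij' (fun t => ⟨t.2.1, t.2.2⟩) (fun p => (p.1ᶜ.erase p.2, p.1, p.2)) ?_ ?_ hfst
    (fun _ _ => rfl) fun t ht => by rw [hfst t ht]
  · intro t ht
    obtain ⟨h2, hi, -⟩ := (validT_iff hn).mp (mem_filter.mp ht).2
    simp [h2, hi]
  · rintro ⟨s, i⟩ hp
    simp only [mem_sigma, mem_powersetCard_univ, mem_compl] at hp
    simp [validT_iff hn, hp]

theorem sum_validT_eq_sum_swap (F : Finset (Fin n) × Finset (Fin n) × Fin n → ℝ) :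
    ∑ t with ValidT l t, F t = ∑ t with ValidT l t, F (t.2.1, t.1, t.2.2) := by
  have hswap : ∀ t : Finset (Fin n) × Finset (Fin n) × Fin n,
      ValidT l (t.2.1, t.1, t.2.2) ↔ ValidT l t := fun t => by
    simp only [ValidT, disjoint_comm]
    tauto
  refine sum_nbij' (fun t => (t.2.1, t.1, t.2.2)) (fun t => (t.2.1, t.1, t.2.2)) ?_ ?_ ?_ ?_ ?_ <;>
    simp [hswap]

theorem sum_validT_sum_filter_mem_mul (hl : 0 < l) (hn : n = 4 * l - 1)
    (f h : Finset (Fin n) → ℝ) :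
    ∑ t with ValidT l t, (∑ x ∈ (insert t.2.2 t.1).powersetCard l with t.2.2 ∈ x, f x) * h t.2.1 =
      ∑ t with ValidT l t, (∑ x ∈ t.1.powersetCard l, f x) * h t.2.1 := by
  rw [sum_validT_eq_sum_sum_compl hn, sum_validT_eq_sum_sum_compl hn]
  refine sum_congr rfl fun s hs => ?_
  have hcard : #sᶜ = 2 * l := by
    rw [card_compl, Fintype.card_fin, (mem_powersetCard.mp hs).2]
    omega
  simp only [← sum_mul]
  congr 1
  calc ∑ i ∈ sᶜ, ∑ x ∈ (insert i (sᶜ.erase i)).powersetCard l with i ∈ x, f x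
      = ∑ i ∈ sᶜ, ∑ x ∈ sᶜ.powersetCard l with i ∈ x, f x :=
        sum_congr rfl fun i hi => by rw [insert_erase hi]
    _ = ∑ i ∈ sᶜ, ∑ x ∈ (sᶜ.erase i).powersetCard l, f x := by
        rw [sum_sum_filter_mem_powersetCard, sum_sum_powersetCard_erase, hcard,
          show 2 * l - l = l by omega]

theorem razDist_apply (t : Finset (Fin n) × Finset (Fin n) × Fin n) (x y : Finset (Fin n)) :
    razDist l n (t, x, y) =
      if ValidT l t ∧ x ∈ (insert t.2.2 t.1).powersetCard l ∧
          y ∈ (insert t.2.2 t.2.1).powersetCard l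
        then (#(razSupp l n) : ℝ)⁻¹ else 0 := by
  simp only [razDist, razSupp, mem_filter, mem_univ, true_and, mem_powersetCard, one_div, and_assoc]

theorem razSupp_card_pos {t : Finset (Fin n) × Finset (Fin n) × Fin n} (ht : ValidT l t) :
    0 < #(razSupp l n) := by
  have hX : ((insert t.2.2 t.1).powersetCard l).Nonempty := by
    rw [powersetCard_nonempty, card_insert_of_notMem ht.2.2.2.1, ht.1]
    omega
  have hY : ((insert t.2.2 t.2.1).powersetCard l).Nonempty := by
    rw [powersetCard_nonempty, card_insert_of_notMem ht.2.2.2.2, ht.2.1]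
    omega
  obtain ⟨x, hx⟩ := hX
  obtain ⟨y, hy⟩ := hY
  refine card_pos.mpr ⟨(t, x, y), ?_⟩
  simp only [mem_powersetCard] at hx hy
  simp only [razSupp, mem_filter, mem_univ, true_and]
  exact ⟨ht, hx.1, hx.2, hy.1, hy.2⟩

theorem sum_razDist_mul (t : Finset (Fin n) × Finset (Fin n) × Fin n)
    (g h : Finset (Fin n) → ℝ) :
    ∑ p : Finset (Fin n) × Finset (Fin n), razDist l n (t, p.1, p.2) * (g p.1 * h p.2) =
      if ValidT l t then
        (∑ x ∈ (insert t.2.2 t.1).powersetCard l, g x) *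
          (∑ y ∈ (insert t.2.2 t.2.1).powersetCard l, h y) / #(razSupp l n)
      else 0 := by
  rw [Fintype.sum_prod_type]
  split_ifs with ht
  · have hpoint : ∀ x y, razDist l n (t, x, y) * (g x * h y) = (#(razSupp l n) : ℝ)⁻¹ *
        ((if x ∈ (insert t.2.2 t.1).powersetCard l then g x else 0) *
          (if y ∈ (insert t.2.2 t.2.1).powersetCard l then h y else 0)) := fun x y => by
      rw [razDist_apply]
      split_ifs <;> simp_all
    simp only [hpoint, ← mul_sum, ← sum_mul]
    rw [sum_ite_mem, sum_ite_mem, univ_inter, univ_inter, div_eq_inv_mul]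
  · simp [razDist_apply, ht]

theorem card_powersetCard_insert {s : Finset (Fin n)} {i : Fin n} (hl : 0 < l)
    (hs : #s = 2 * l - 1) (hi : i ∉ s) :
    #((insert i s).powersetCard l) = 2 * (2 * l - 1).choose l := by
  rw [card_powersetCard, card_insert_of_notMem hi, hs, ← Nat.choose_two_mul_eq_two_mul_choose hl]
  congr 1
  omega

theorem przT_eq (hl : 0 < l) (t : Finset (Fin n) × Finset (Fin n) × Fin n) :
    przT l n t = if ValidT l t then (2 * (2 * l - 1).choose l : ℝ) ^ 2 / #(razSupp l n) else 0 := by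
  have h := sum_razDist_mul (l := l) t 1 1
  simp only [Pi.one_apply, mul_one, sum_const, nsmul_one] at h
  rw [przT, h]
  split_ifs with ht
  · rw [card_powersetCard_insert hl ht.1 ht.2.2.2.1, card_powersetCard_insert hl ht.2.1 ht.2.2.2.2]
    push_cast
    ring
  · rfl

theorem sum_ite_notMem_fst_razDist (hl : 0 < l) {t : Finset (Fin n) × Finset (Fin n) × Fin n}
    (ht : ValidT l t) (g : Finset (Fin n) → ℝ) :
    ∑ p : Finset (Fin n) × Finset (Fin n),
        (if t.2.2 ∉ p.1 then razDist l n (t, p.1, p.2) * g p.1 else 0) =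
      (∑ x ∈ t.1.powersetCard l, g x) * (2 * (2 * l - 1).choose l) / #(razSupp l n) := by
  have h := sum_razDist_mul (l := l) t (fun x => if t.2.2 ∉ x then g x else 0) 1
  rw [if_pos ht, ← sum_filter, filter_notMem_powersetCard_insert ht.2.2.2.1] at h
  simp only [Pi.one_apply, sum_const, nsmul_one, card_powersetCard_insert hl ht.2.1 ht.2.2.2.2,
    mul_one, mul_ite, mul_zero, Nat.cast_mul, Nat.cast_ofNat] at h
  exact h

theorem sum_ite_notMem_snd_razDist (hl : 0 < l) {t : Finset (Fin n) × Finset (Fin n) × Fin n}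
    (ht : ValidT l t) (g : Finset (Fin n) → ℝ) :
    ∑ p : Finset (Fin n) × Finset (Fin n),
        (if t.2.2 ∉ p.2 then razDist l n (t, p.1, p.2) * g p.2 else 0) =
      (∑ y ∈ t.2.1.powersetCard l, g y) * (2 * (2 * l - 1).choose l) / #(razSupp l n) := by
  have h := sum_razDist_mul (l := l) t 1 (fun y => if t.2.2 ∉ y then g y else 0)
  rw [if_pos ht, ← sum_filter, filter_notMem_powersetCard_insert ht.2.2.2.2] at h
  simp only [Pi.one_apply, sum_const, nsmul_one, card_powersetCard_insert hl ht.1 ht.2.2.2.1,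
    one_mul, mul_ite, mul_zero, Nat.cast_mul, Nat.cast_ofNat] at h
  rw [h, mul_comm]

theorem prA1givenNotInX_eq (hl : 0 < l) {t : Finset (Fin n) × Finset (Fin n) × Fin n}
    (ht : ValidT l t) (a : Finset (Fin n) → ℝ) :
    prA1givenNotInX l n a t = (∑ x ∈ t.1.powersetCard l, a x) / (2 * l - 1).choose l := by
  have hden := sum_ite_notMem_fst_razDist hl ht 1
  simp only [Pi.one_apply, mul_one, sum_const, card_powersetCard, ht.1, nsmul_one] at hden
  have hN : (0 : ℝ) < #(razSupp l n) := Nat.cast_pos.mpr (razSupp_card_pos ht)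
  have hc : (0 : ℝ) < (2 * l - 1).choose l := Nat.cast_pos.mpr (Nat.choose_pos (by omega))
  rw [prA1givenNotInX, sum_ite_notMem_fst_razDist hl ht, hden]
  field_simp

theorem prB1givenNotInY_eq (hl : 0 < l) {t : Finset (Fin n) × Finset (Fin n) × Fin n}
    (ht : ValidT l t) (b : Finset (Fin n) → ℝ) :
    prB1givenNotInY l n b t = (∑ y ∈ t.2.1.powersetCard l, b y) / (2 * l - 1).choose l := by
  have hden := sum_ite_notMem_snd_razDist hl ht 1
  simp only [Pi.one_apply, mul_one, sum_const, card_powersetCard, ht.2.1, nsmul_one] at hden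
  have hN : (0 : ℝ) < #(razSupp l n) := Nat.cast_pos.mpr (razSupp_card_pos ht)
  have hc : (0 : ℝ) < (2 * l - 1).choose l := Nat.cast_pos.mpr (Nat.choose_pos (by omega))
  rw [prB1givenNotInY, sum_ite_notMem_snd_razDist hl ht, hden]
  field_simp

theorem przT_mul_prA1givenNotInX_mul_prB1givenNotInY (hl : 0 < l) (a b : Finset (Fin n) → ℝ)
    (t : Finset (Fin n) × Finset (Fin n) × Fin n) :
    przT l n t * (prA1givenNotInX l n a t * prB1givenNotInY l n b t) =
      if ValidT l t then
        4 * ((∑ x ∈ t.1.powersetCard l, a x) * ∑ y ∈ t.2.1.powersetCard l, b y) / #(razSupp l n)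
      else 0 := by
  rw [przT_eq hl]
  split_ifs with ht
  · have hc : (0 : ℝ) < (2 * l - 1).choose l := Nat.cast_pos.mpr (Nat.choose_pos (by omega))
    rw [prA1givenNotInX_eq hl ht, prB1givenNotInY_eq hl ht]
    field_simp
    ring
  · rw [zero_mul]

theorem sum_ite_inter_eq_empty_razDist (t : Finset (Fin n) × Finset (Fin n) × Fin n)
    (a b : Finset (Fin n) → ℝ) :
    ∑ p : Finset (Fin n) × Finset (Fin n),
        (if p.1 ∩ p.2 = ∅ then razDist l n (t, p.1, p.2) * a p.1 * b p.2 else 0) =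
      if ValidT l t then
        ((∑ x ∈ t.1.powersetCard l, a x) * (∑ y ∈ t.2.1.powersetCard l, b y) +
          (∑ x ∈ t.1.powersetCard l, a x) *
            (∑ y ∈ (insert t.2.2 t.2.1).powersetCard l with t.2.2 ∈ y, b y) +
          (∑ x ∈ (insert t.2.2 t.1).powersetCard l with t.2.2 ∈ x, a x) *
            (∑ y ∈ t.2.1.powersetCard l, b y)) / #(razSupp l n)
      else 0 := by
  have hpoint : ∀ x y : Finset (Fin n),
      (if x ∩ y = ∅ then razDist l n (t, x, y) * a x * b y else 0) =
        razDist l n (t, x, y) * (a x * b y) - razDist l n (t, x, y) *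
          ((if t.2.2 ∈ x then a x else 0) * (if t.2.2 ∈ y then b y else 0)) := fun x y => by
    by_cases hq : ValidT l t ∧ x ∈ (insert t.2.2 t.1).powersetCard l ∧
        y ∈ (insert t.2.2 t.2.1).powersetCard l
    · obtain ⟨ht, hx, hy⟩ := hq
      simp only [inter_eq_empty_iff_of_subset_insert ht.2.2.1 (mem_powersetCard.mp hx).1
        (mem_powersetCard.mp hy).1]
      by_cases hix : t.2.2 ∈ x <;> by_cases hiy : t.2.2 ∈ y <;> simp [hix, hiy] <;> ring
    · simp only [razDist_apply, if_neg hq]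
      simp
  rw [sum_congr rfl fun p _ => hpoint p.1 p.2, sum_sub_distrib, sum_razDist_mul]
  simp only [sum_razDist_mul (l := l) t (fun x => if t.2.2 ∈ x then a x else 0)
    (fun y => if t.2.2 ∈ y then b y else 0)]
  split_ifs with ht
  · have hsplit : ∀ (s : Finset (Fin n)) (f : Finset (Fin n) → ℝ), t.2.2 ∉ s →
        ∑ x ∈ (insert t.2.2 s).powersetCard l, f x =
          ∑ x ∈ s.powersetCard l, f x + ∑ x ∈ (insert t.2.2 s).powersetCard l with t.2.2 ∈ x, f x :=
      fun s f hi => by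
        rw [← filter_notMem_powersetCard_insert hi, add_comm, sum_filter_add_sum_filter_not]
    rw [← sum_filter, ← sum_filter, hsplit _ a ht.2.2.2.1, hsplit _ b ht.2.2.2.2]
    ring
  · rw [sub_zero]

theorem sum_validT_mul_sum_filter_mem (hl : 0 < l) (hn : n = 4 * l - 1)
    (g f : Finset (Fin n) → ℝ) :
    ∑ t with ValidT l t, g t.1 * ∑ y ∈ (insert t.2.2 t.2.1).powersetCard l with t.2.2 ∈ y, f y =
      ∑ t with ValidT l t, g t.1 * ∑ y ∈ t.2.1.powersetCard l, f y := by
  rw [sum_validT_eq_sum_swap]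
  conv_rhs => rw [sum_validT_eq_sum_swap]
  simp only [mul_comm (g _)]
  exact sum_validT_sum_filter_mem_mul hl hn f g

end

theorem razborov_disjoint_success_general (l n : ℕ) (hl : 0 < l) (hn : n = 4 * l - 1)
    (a b : Finset (Fin n) → ℝ) :
    (∑ q : (Finset (Fin n) × Finset (Fin n) × Fin n) × Finset (Fin n) × Finset (Fin n),
        if q.2.1 ∩ q.2.2 = ∅ then razDist l n q * a q.2.1 * b q.2.2 else 0) =
      (3 / 4) * ∑ t : Finset (Fin n) × Finset (Fin n) × Fin n,
        przT l n t * (prA1givenNotInX l n a t * prB1givenNotInY l n b t) := by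
  have hthrough_a := sum_validT_sum_filter_mem_mul hl hn a fun s => ∑ y ∈ s.powersetCard l, b y
  have hthrough_b := sum_validT_mul_sum_filter_mem hl hn (fun s => ∑ x ∈ s.powersetCard l, a x) b
  rw [Fintype.sum_prod_type, sum_congr rfl fun t _ => sum_ite_inter_eq_empty_razDist t a b,
    sum_congr rfl fun t _ => przT_mul_prA1givenNotInX_mul_prB1givenNotInY hl a b t,
    ← sum_filter, ← sum_filter, ← sum_div, ← sum_div, sum_add_distrib, sum_add_distrib,
    hthrough_a, hthrough_b, ← mul_sum]
  ring

/-- For `(T,X,Y)` Razborov-distributed (`n = 4l − 1`) and `A, B`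
forming the Markov chain `A ↔ X ↔ Y ↔ B`:
`Pr[A = B = 1 ∧ X ∩ Y = ∅]
  = (3/4)·E_{t←T}[ Pr[A=1 ∣ T=t, I∉X] · Pr[B=1 ∣ T=t, I∉Y] ]`. -/
theorem razborov_disjoint_success (l n : ℕ) (hl : 0 < l) (hn : n = 4 * l - 1)
    (a b : Finset (Fin n) → ℝ)
    (ha : ∀ x, 0 ≤ a x ∧ a x ≤ 1) (hb : ∀ y, 0 ≤ b y ∧ b y ≤ 1) :
    (∑ q : (Finset (Fin n) × Finset (Fin n) × Fin n) × Finset (Fin n) × Finset (Fin n),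
        if q.2.1 ∩ q.2.2 = ∅ then razDist l n q * a q.2.1 * b q.2.2 else 0) =
      (3 / 4) * ∑ t : Finset (Fin n) × Finset (Fin n) × Fin n,
        przT l n t * (prA1givenNotInX l n a t * prB1givenNotInY l n b t) :=
  razborov_disjoint_success_general l n hl hn a b

end
end
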